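/- arXiv:2005.09013 — 2 statements merged into one kernel-verified Lean document; each statement's English description precedes it below -/
import Mathlib

section
/- The supremum over all n ∈ ℕ of Φⁿ(0)(false, 0), where 0 is the constant-zero function, equals ENNReal.ofReal(π²/12 − 1/2). (This is the weakest preexpectation wp[C](1) = π²/12 − 1/2 of the constant function 1 for the paper's example program, obtained as the supremum of the fixpoint iterates.) -/
/-!
By induction on `n`, `Φⁿ⁺¹(0)(false, k) = (k+1)/(k+2) · ∑_{j<n} 1/(k+j+2)²`: the
factorisation `(k+2)² − 1 = (k+1)(k+3)` turns the continuation weight times the prefactor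
`(k+2)/(k+3)` at `k+1` into the prefactor `(k+1)/(k+2)` at `k`, and the termination branch
contributes the new first summand. At `k = 0` the iterates are therefore the partial sums of
`½ ∑_{i ≥ 2} 1/i² = ½ (π²/6 − 1)`, whose supremum is the full series.
-/

open scoped ENNReal

/-- The weakest-(liberal-)preexpectation characteristic functional of the paper's example
loop: with counter `k`, the loop body terminates with probability `1/(k+2)²` while
issuing score `(k+1)/(k+2)`, and otherwise increments `k` and repeats. -/
noncomputable def Phi (X : Bool × ℕ → ℝ≥0∞) : Bool × ℕ → ℝ≥0∞ := fun p =>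
  match p with
  | (true, _) => 1
  | (false, k) =>
      (((k : ℝ≥0∞) + 1) / ((k : ℝ≥0∞) + 2) ^ 3) * X (true, k + 1) +
        ((((k : ℝ≥0∞) + 2) ^ 2 - 1) / ((k : ℝ≥0∞) + 2) ^ 2) * X (false, k + 1)

theorem ENNReal.div_pow_succ (a b : ℝ≥0∞) (n : ℕ) : a / b ^ (n + 1) = a / b * (b ^ n)⁻¹ := by
  simp only [div_eq_mul_inv, ENNReal.inv_pow]; ring

theorem ENNReal.mul_div_sq_mul_div_cancel (a : ℝ≥0∞) {b c : ℝ≥0∞} (hb₀ : b ≠ 0) (hb : b ≠ ∞)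
    (hc₀ : c ≠ 0) (hc : c ≠ ∞) : a * c / b ^ 2 * (b / c) = a / b := by
  simp only [div_eq_mul_inv, ENNReal.inv_pow]
  calc a * c * b⁻¹ ^ 2 * (b * c⁻¹) = a * b⁻¹ * (b * b⁻¹) * (c * c⁻¹) := by ring
    _ = a * b⁻¹ := by
      rw [ENNReal.mul_inv_cancel hb₀ hb, ENNReal.mul_inv_cancel hc₀ hc, mul_one, mul_one]

theorem hasSum_inv_sq_add_two :
    HasSum (fun j : ℕ => (((j : ℝ) + 2) ^ 2)⁻¹) (Real.pi ^ 2 / 6 - 1) := by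
  have h := (hasSum_nat_add_iff' 2).2 hasSum_zeta_two
  norm_num [Finset.sum_range_succ] at h
  exact h

theorem ENNReal.tsum_inv_sq_add_two :
    ∑' j : ℕ, (((j : ℝ≥0∞) + 2) ^ 2)⁻¹ = ENNReal.ofReal (Real.pi ^ 2 / 6 - 1) := by
  rw [← hasSum_inv_sq_add_two.tsum_eq,
    ENNReal.ofReal_tsum_of_nonneg (fun _ => by positivity) hasSum_inv_sq_add_two.summable]
  refine tsum_congr fun j => ?_
  rw [ENNReal.ofReal_inv_of_pos (by positivity), ENNReal.ofReal_pow (by positivity),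
    ENNReal.ofReal_add (by positivity) zero_le_two, ENNReal.ofReal_natCast, ENNReal.ofReal_ofNat]

theorem Phi_iterate_succ_true (n k : ℕ) : Phi^[n + 1] 0 (true, k) = 1 := by
  rw [Function.iterate_succ_apply']
  rfl

theorem Phi_iterate_succ_false (n k : ℕ) :
    Phi^[n + 1] 0 (false, k) =
      ((k : ℝ≥0∞) + 1) / (k + 2) * ∑ j ∈ Finset.range n, ((((k + j : ℕ) : ℝ≥0∞) + 2) ^ 2)⁻¹ := by
  induction n generalizing k with
  | zero => simp [Phi]
  | succ n ih =>
    have hsq : ((k : ℝ≥0∞) + 2) ^ 2 - 1 = (k + 1) * (k + 3) := by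
      rw [show ((k : ℝ≥0∞) + 2) ^ 2 = (k + 1) * (k + 3) + 1 by ring,
        ENNReal.add_sub_cancel_right ENNReal.one_ne_top]
    have hcoef : (((k : ℝ≥0∞) + 2) ^ 2 - 1) / (k + 2) ^ 2 *
        ((((k + 1 : ℕ) : ℝ≥0∞) + 1) / ((k + 1 : ℕ) + 2)) = (k + 1) / (k + 2) := by
      rw [hsq]; push_cast
      rw [show (k : ℝ≥0∞) + 1 + 1 = k + 2 by ring, show (k : ℝ≥0∞) + 1 + 2 = k + 3 by ring]
      exact ENNReal.mul_div_sq_mul_div_cancel _ (by positivity) (by simp) (by positivity) (by simp)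
    rw [Function.iterate_succ_apply']
    change ((k : ℝ≥0∞) + 1) / (k + 2) ^ 3 * Phi^[n + 1] 0 (true, k + 1) +
        (((k : ℝ≥0∞) + 2) ^ 2 - 1) / (k + 2) ^ 2 * Phi^[n + 1] 0 (false, k + 1) = _
    rw [Phi_iterate_succ_true, ih, ← mul_assoc, hcoef, Finset.sum_range_succ', mul_add, add_comm,
      mul_one, ENNReal.div_pow_succ]
    simp [add_assoc, add_comm 1]

/-- The weakest preexpectation `wp[C](1) = π²/12 − 1/2` of the example program, as the
supremum of the fixpoint iterates `Φⁿ(0)` evaluated at the initial state `(false, 0)`. -/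
theorem phi_iterate_zero_sup :
    ⨆ n : ℕ, Phi^[n] 0 (false, 0) = ENNReal.ofReal (Real.pi ^ 2 / 12 - 1 / 2) := by
  -- `n - 1` truncates, so `n = 0` also gives the empty sum
  have hiter (n : ℕ) :
      Phi^[n] 0 (false, 0) = ∑ j ∈ Finset.range (n - 1), 2⁻¹ * (((j : ℝ≥0∞) + 2) ^ 2)⁻¹ := by
    cases n with
    | zero => simp
    | succ n => simp [Phi_iterate_succ_false, Finset.mul_sum]
  calc ⨆ n : ℕ, Phi^[n] 0 (false, 0)
      = ∑' j : ℕ, 2⁻¹ * (((j : ℝ≥0∞) + 2) ^ 2)⁻¹ := by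
        simp_rw [hiter]
        exact (ENNReal.tsum_eq_iSup_nat' (Filter.tendsto_sub_atTop_nat 1)).symm
    _ = ENNReal.ofReal 2⁻¹ * ENNReal.ofReal (Real.pi ^ 2 / 6 - 1) := by
        rw [ENNReal.tsum_mul_left, ENNReal.tsum_inv_sq_add_two, ENNReal.ofReal_inv_of_pos two_pos,
          ENNReal.ofReal_ofNat]
    _ = ENNReal.ofReal (Real.pi ^ 2 / 12 - 1 / 2) := by
        rw [← ENNReal.ofReal_mul (by norm_num)]
        ring_nf
end

section
/- For every natural number n ≥ 1 and every k ∈ ℕ, the n-fold iterate of Φ applied to the constant-one function satisfies Φⁿ(1)(false, k) = ((k+1)/(k+2)) · ∑_{i=2}^{n+1} ((k+i)²)⁻¹ + ∏_{i=2}^{n+1} (((k+i)² − 1)/(k+i)²), where the sum and product are over integers i with 2 ≤ i ≤ n+1. (This is the closed form for the weakest-liberal-preexpectation fixpoint iterates of the example loop.) -/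
open scoped ENNReal

lemma phi_true (n k : ℕ) : Phi^[n] 1 (true, k) = 1 := by
  induction n with
  | zero => rfl
  | succ n _ => rw [Function.iterate_succ_apply']; rfl

lemma Icc_shift (n : ℕ) :
    Finset.Icc 2 (n + 2) = insert 2 ((Finset.Icc 2 (n + 1)).map (addRightEmbedding 1)) := by
  rw [Finset.map_add_right_Icc]
  have h : Finset.Icc (2 + 1) (n + 1 + 1) = Finset.Ioc 2 (n + 2) := Finset.Icc_add_one_left_eq_Ioc 2 (n + 2)
  rw [h, Finset.Ioc_insert_left (by omega)]

lemma sum_shift {M : Type*} [AddCommMonoid M] (f : ℕ → M) (n : ℕ) :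
    ∑ i ∈ Finset.Icc 2 (n + 2), f i = f 2 + ∑ i ∈ Finset.Icc 2 (n + 1), f (i + 1) := by
  rw [Icc_shift, Finset.sum_insert (by simp), Finset.sum_map]
  rfl

lemma prod_shift {M : Type*} [CommMonoid M] (f : ℕ → M) (n : ℕ) :
    ∏ i ∈ Finset.Icc 2 (n + 2), f i = f 2 * ∏ i ∈ Finset.Icc 2 (n + 1), f (i + 1) := by
  rw [Icc_shift, Finset.prod_insert (by simp), Finset.prod_map]
  rfl

lemma key_cancel (a y z : ℝ≥0∞) (hy0 : y ≠ 0) (hy : y ≠ ∞) (hz0 : z ≠ 0) (hz : z ≠ ∞) :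
    a * z / y ^ 2 * (y / z) = a / y := by
  have h1 : y * y⁻¹ = 1 := ENNReal.mul_inv_cancel hy0 hy
  have h2 : z * z⁻¹ = 1 := ENNReal.mul_inv_cancel hz0 hz
  have hsq : (y ^ 2)⁻¹ = y⁻¹ * y⁻¹ := by rw [sq, ENNReal.mul_inv (Or.inl hy0) (Or.inl hy)]
  rw [div_eq_mul_inv, div_eq_mul_inv, div_eq_mul_inv, hsq]
  calc a * z * (y⁻¹ * y⁻¹) * (y * z⁻¹) = a * y⁻¹ * ((y * y⁻¹) * (z * z⁻¹)) := by ring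
  _ = a * y⁻¹ := by rw [h1, h2]; ring

lemma key_pow3 (a y : ℝ≥0∞) (hy0 : y ≠ 0) (hy : y ≠ ∞) :
    a / y ^ 3 = a / y * (y ^ 2)⁻¹ := by
  rw [div_eq_mul_inv, div_eq_mul_inv, show y ^ 3 = y * y ^ 2 by ring,
    ENNReal.mul_inv (Or.inl hy0) (Or.inl hy), mul_assoc]

lemma key_sub (x : ℝ≥0∞) : (x + 2) ^ 2 - 1 = (x + 1) * (x + 3) := by
  have h : (x + 2) ^ 2 = (x + 1) * (x + 3) + 1 := by ring
  rw [h, ENNReal.add_sub_cancel_right ENNReal.one_ne_top]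

/-- Closed form for the weakest-liberal-preexpectation fixpoint iterates of the example
loop: for `n ≥ 1`,
`Φⁿ(1)(false, k) = ((k+1)/(k+2)) · ∑_{i=2}^{n+1} 1/(k+i)² + ∏_{i=2}^{n+1} ((k+i)²−1)/(k+i)²`. -/
theorem phi_iterate_one_closed_form (n : ℕ) (hn : 1 ≤ n) (k : ℕ) :
    Phi^[n] 1 (false, k) =
      (((k : ℝ≥0∞) + 1) / ((k : ℝ≥0∞) + 2)) *
          ∑ i ∈ Finset.Icc 2 (n + 1), (((k : ℝ≥0∞) + (i : ℝ≥0∞)) ^ 2)⁻¹ +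
        ∏ i ∈ Finset.Icc 2 (n + 1),
          ((((k : ℝ≥0∞) + (i : ℝ≥0∞)) ^ 2 - 1) / ((k : ℝ≥0∞) + (i : ℝ≥0∞)) ^ 2) := by
  induction n, hn using Nat.le_induction generalizing k with
  | base =>
    have hy0 : ((k : ℝ≥0∞) + 2) ≠ 0 := by simp
    have hy : ((k : ℝ≥0∞) + 2) ≠ ∞ := by finiteness
    rw [Function.iterate_one]
    show (((k : ℝ≥0∞) + 1) / ((k : ℝ≥0∞) + 2) ^ 3) * 1 +
        ((((k : ℝ≥0∞) + 2) ^ 2 - 1) / ((k : ℝ≥0∞) + 2) ^ 2) * 1 = _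
    rw [show (1 : ℕ) + 1 = 2 from rfl, Finset.Icc_self, Finset.sum_singleton,
      Finset.prod_singleton, mul_one, mul_one]
    push_cast
    rw [key_pow3 _ _ hy0 hy]
  | succ n hn ih =>
    have hy0 : ((k : ℝ≥0∞) + 2) ≠ 0 := by simp
    have hy : ((k : ℝ≥0∞) + 2) ≠ ∞ := by finiteness
    have hz0 : ((k : ℝ≥0∞) + 3) ≠ 0 := by simp
    have hz : ((k : ℝ≥0∞) + 3) ≠ ∞ := by finiteness
    rw [Function.iterate_succ_apply']
    show (((k : ℝ≥0∞) + 1) / ((k : ℝ≥0∞) + 2) ^ 3) * Phi^[n] 1 (true, k + 1) +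
        ((((k : ℝ≥0∞) + 2) ^ 2 - 1) / ((k : ℝ≥0∞) + 2) ^ 2) * Phi^[n] 1 (false, k + 1) = _
    rw [phi_true, mul_one, ih (k + 1)]
    rw [show n + 1 + 1 = n + 2 from rfl, sum_shift, prod_shift]
    have hS : (∑ i ∈ Finset.Icc 2 (n + 1), (((k : ℝ≥0∞) + ((i + 1 : ℕ) : ℝ≥0∞)) ^ 2)⁻¹) =
        ∑ i ∈ Finset.Icc 2 (n + 1), ((((k + 1 : ℕ) : ℝ≥0∞) + (i : ℝ≥0∞)) ^ 2)⁻¹ :=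
      Finset.sum_congr rfl fun i _ => by push_cast; ring_nf
    have hP : (∏ i ∈ Finset.Icc 2 (n + 1),
          ((((k : ℝ≥0∞) + ((i + 1 : ℕ) : ℝ≥0∞)) ^ 2 - 1) /
            ((k : ℝ≥0∞) + ((i + 1 : ℕ) : ℝ≥0∞)) ^ 2)) =
        ∏ i ∈ Finset.Icc 2 (n + 1),
          (((((k + 1 : ℕ) : ℝ≥0∞) + (i : ℝ≥0∞)) ^ 2 - 1) /
            (((k + 1 : ℕ) : ℝ≥0∞) + (i : ℝ≥0∞)) ^ 2) :=
      Finset.prod_congr rfl fun i _ => by push_cast; ring_nf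
    rw [hS, hP]
    set S := ∑ i ∈ Finset.Icc 2 (n + 1), ((((k + 1 : ℕ) : ℝ≥0∞) + (i : ℝ≥0∞)) ^ 2)⁻¹ with hSdef
    set P := ∏ i ∈ Finset.Icc 2 (n + 1),
        (((((k + 1 : ℕ) : ℝ≥0∞) + (i : ℝ≥0∞)) ^ 2 - 1) /
          (((k + 1 : ℕ) : ℝ≥0∞) + (i : ℝ≥0∞)) ^ 2) with hPdef
    push_cast
    have hc : ((k : ℝ≥0∞) + 1) * ((k : ℝ≥0∞) + 3) / ((k : ℝ≥0∞) + 2) ^ 2 *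
        (((k : ℝ≥0∞) + 2) / ((k : ℝ≥0∞) + 3)) = ((k : ℝ≥0∞) + 1) / ((k : ℝ≥0∞) + 2) :=
      key_cancel _ _ _ hy0 hy hz0 hz
    rw [show ((k : ℝ≥0∞) + 1) + 1 = (k : ℝ≥0∞) + 2 by ring,
      show ((k : ℝ≥0∞) + 1) + 2 = (k : ℝ≥0∞) + 3 by ring,
      key_sub, key_pow3 _ _ hy0 hy,
      mul_add (((k : ℝ≥0∞) + 1) * ((k : ℝ≥0∞) + 3) / ((k : ℝ≥0∞) + 2) ^ 2)
        (((k : ℝ≥0∞) + 2) / ((k : ℝ≥0∞) + 3) * S) P,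
      ← mul_assoc (((k : ℝ≥0∞) + 1) * ((k : ℝ≥0∞) + 3) / ((k : ℝ≥0∞) + 2) ^ 2)
        (((k : ℝ≥0∞) + 2) / ((k : ℝ≥0∞) + 3)) S,
      hc]
    ring
end
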